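/- If J is a classical universal solution of I w.r.t. a setting S and Q is a positive query, then the supported certain answers to Q over I w.r.t. S equal the null-free answers of Q on J, i.e., scert(I,Q,S) = Q(J) ∩ Const^ar(Q). -/

import Mathlib

namespace DE

abbrev Var := ℕ

inductive Term (C : Type) where
  | const : C → Term C
  | null : ℕ → Term C

structure Atom (R C : Type) where
  rel : R
  args : List (Var ⊕ C)

structure Fact (R C : Type) where
  rel : R
  args : List (Term C)

abbrev Instance (R C : Type) := Set (Fact R C)

def termOf {C : Type} (h : Var → Term C) : Var ⊕ C → Term C
  | Sum.inl v => h v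
  | Sum.inr c => Term.const c

def applyAtom {R C : Type} (h : Var → Term C) (a : Atom R C) : Fact R C :=
  ⟨a.rel, a.args.map (termOf h)⟩

/-- `h` maps every atom of `as` into the instance `I`. -/
def holdsBody {R C : Type} (I : Instance R C) (h : Var → Term C)
    (as : List (Atom R C)) : Prop :=
  ∀ a ∈ as, applyAtom h a ∈ I

/-- A tuple-generating dependency. -/
structure TGD (R C : Type) where
  body : List (Atom R C)
  head : List (Atom R C)
  frontier : List Var
  exvars : List Var

def varsOf {R C : Type} (as : List (Atom R C)) : Set Var :=
  {v | ∃ a ∈ as, (Sum.inl v : Var ⊕ C) ∈ a.args}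

/-- Well-formedness of a TGD: frontier variables occur in the body, existential
variables do not, and every head variable is a frontier or existential variable. -/
def TGD.wf {R C : Type} (ρ : TGD R C) : Prop :=
  (∀ v ∈ ρ.frontier, v ∈ varsOf ρ.body) ∧
  (∀ z ∈ ρ.exvars, z ∉ varsOf ρ.body) ∧
  (∀ v ∈ varsOf ρ.head, v ∈ ρ.frontier ∨ v ∈ ρ.exvars)

/-- Satisfaction of a TGD by an instance. -/
def satTGD {R C : Type} (I : Instance R C) (ρ : TGD R C) : Prop :=
  ∀ h : Var → Term C, holdsBody I h ρ.body →
    ∃ h' : Var → Term C, (∀ v ∈ varsOf ρ.body, h' v = h v) ∧ holdsBody I h' ρ.head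

/-- An equality-generating dependency. -/
structure EGD (R C : Type) where
  body : List (Atom R C)
  lhs : Var
  rhs : Var

def satEGD {R C : Type} (I : Instance R C) (η : EGD R C) : Prop :=
  ∀ h : Var → Term C, holdsBody I h η.body → h η.lhs = h η.rhs

/-- An ex-choice: given a TGD and a tuple of constants for its frontier,
a constant for each existential variable. -/
abbrev ExChoice (R C : Type) := TGD R C → List C → Var → C

def constHom {C : Type} (h : Var → C) : Var → Term C := fun v => Term.const (h v)

/-- `I` satisfies all ground versions of the TGD `ρ` that are coherent with `γ`. -/
def satTGDcoh {R C : Type} (I : Instance R C) (γ : ExChoice R C) (ρ : TGD R C) : Prop :=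
  ∀ h : Var → C, (∀ z ∈ ρ.exvars, h z = γ ρ (ρ.frontier.map h) z) →
    holdsBody I (constHom h) ρ.body → holdsBody I (constHom h) ρ.head

/-- A data exchange setting: source-to-target TGDs, target TGDs, target EGDs. -/
structure Setting (R C : Type) where
  sigmaST : List (TGD R C)
  sigmaT : List (TGD R C)
  sigmaE : List (EGD R C)

def Setting.wf {R C : Type} (S : Setting R C) : Prop :=
  ∀ ρ ∈ S.sigmaST ++ S.sigmaT, ρ.wf

/-- Classical solution: `I ∪ J` satisfies `Σst` and `J` satisfies `Σt`. -/
def classicalSolution {R C : Type} (S : Setting R C) (I J : Instance R C) : Prop :=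
  J.Finite ∧ (∀ ρ ∈ S.sigmaST, satTGD (I ∪ J) ρ) ∧
    (∀ ρ ∈ S.sigmaT, satTGD J ρ) ∧ (∀ η ∈ S.sigmaE, satEGD J η)

def supportedWith {R C : Type} (S : Setting R C) (γ : ExChoice R C)
    (I J : Instance R C) : Prop :=
  (∀ ρ ∈ S.sigmaST, satTGDcoh (I ∪ J) γ ρ) ∧
    (∀ ρ ∈ S.sigmaT, satTGDcoh J γ ρ) ∧ (∀ η ∈ S.sigmaE, satEGD J η)

/-- Supported solution: for some ex-choice `γ`, `I ∪ J` satisfies `Σst^γ`,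
`J` satisfies `Σt^γ`, and no proper subset of `J` does. -/
def supportedSolution {R C : Type} (S : Setting R C) (I J : Instance R C) : Prop :=
  J.Finite ∧ ∃ γ : ExChoice R C, supportedWith S γ I J ∧
    ∀ J' : Instance R C, J' ⊂ J → ¬ supportedWith S γ I J'

/-- An instance without labeled nulls (a database). -/
def nullFree {R C : Type} (I : Instance R C) : Prop :=
  ∀ f ∈ I, ∀ t ∈ f.args, ∃ c : C, t = Term.const c

end DE

namespace DE

/-- A conjunctive query with body atoms and a tuple of free variables. -/
structure CQ (R C : Type) where
  body : List (Atom R C)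
  free : List Var

def CQ.safe {R C : Type} (q : CQ R C) : Prop := ∀ v ∈ q.free, v ∈ varsOf q.body

def evalCQ {R C : Type} (q : CQ R C) (J : Instance R C) : Set (List (Term C)) :=
  {t | ∃ h : Var → Term C, holdsBody J h q.body ∧ t = q.free.map h}

/-- Output of a union of conjunctive queries (positive query). -/
def evalUCQ {R C : Type} (Q : List (CQ R C)) (J : Instance R C) : Set (List (Term C)) :=
  {t | ∃ q ∈ Q, t ∈ evalCQ q J}

/-- Classical certain answers. -/
def cert {R C : Type} (S : Setting R C) (I : Instance R C) (Q : List (CQ R C)) :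
    Set (List (Term C)) :=
  {t | ∀ J, classicalSolution S I J → t ∈ evalUCQ Q J}

/-- Supported certain answers. -/
def scert {R C : Type} (S : Setting R C) (I : Instance R C) (Q : List (CQ R C)) :
    Set (List (Term C)) :=
  {t | ∀ J, supportedSolution S I J → t ∈ evalUCQ Q J}

end DE

namespace DE

def constsOfAtoms {R C : Type} (as : List (Atom R C)) : Set C :=
  {c | ∃ a ∈ as, (Sum.inr c : Var ⊕ C) ∈ a.args}

def constsOfTGD {R C : Type} (ρ : TGD R C) : Set C :=
  constsOfAtoms ρ.body ∪ constsOfAtoms ρ.head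

def constsOfEGD {R C : Type} (η : EGD R C) : Set C := constsOfAtoms η.body

def constsOfSetting {R C : Type} (S : Setting R C) : Set C :=
  {c | ∃ ρ ∈ S.sigmaST ++ S.sigmaT, c ∈ constsOfTGD ρ} ∪
    {c | ∃ η ∈ S.sigmaE, c ∈ constsOfEGD η}

def constsOfInstance {R C : Type} (I : Instance R C) : Set C :=
  {c | ∃ f ∈ I, Term.const c ∈ f.args}

/-- Replace each labeled null by a constant according to `r`. -/
def renameTerm {C : Type} (r : ℕ → C) : Term C → Term C
  | Term.null n => Term.const (r n)
  | Term.const c => Term.const c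

def renameFact {R C : Type} (r : ℕ → C) (f : Fact R C) : Fact R C :=
  ⟨f.rel, f.args.map (renameTerm r)⟩

/-- Active domain of an instance. -/
def adom {R C : Type} (J : Instance R C) : Set (Term C) := {t | ∃ f ∈ J, t ∈ f.args}

def mapFact {R C : Type} (h : Term C → Term C) (f : Fact R C) : Fact R C :=
  ⟨f.rel, f.args.map h⟩

end DE

namespace DE

def isHom {R C : Type} (h : Term C → Term C) (J J' : Instance R C) : Prop :=
  (∀ c : C, h (Term.const c) = Term.const c) ∧ ∀ f ∈ J, mapFact h f ∈ J'

/-- A (classical) universal solution. -/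
def universalSolution {R C : Type} (S : Setting R C) (I J : Instance R C) : Prop :=
  classicalSolution S I J ∧
    ∀ J' : Instance R C, classicalSolution S I J' → ∃ h : Term C → Term C, isHom h J J'

end DE

/-!
Take a solution `J` and an answer `t` that is certain over all supported solutions. Swapping the
labelled nulls of `J` with fresh constants is a permutation of terms fixing every constant of the
setting, of `I`, of `Q` and of `t`, so it turns `J` into a null-free classical solution `J₀`.
Choosing for every existential variable a value already witnessed in `J₀` gives an ex-choice for
which `J₀` satisfies the coherent ground dependencies, and a minimal such subinstance is a supported
solution; hence `t ∈ Q(J₀)`, and swapping back gives `t ∈ Q(J)`, with `t` null-free because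
supported solutions are. Conversely, a supported solution is null-free and therefore a classical
solution, so a universal `J` maps into it by a homomorphism, which preserves null-free answers of
the positive query `Q`.
-/

namespace DE

variable {R C : Type}

def constsOfUCQ (Q : List (CQ R C)) : Set C := {c | ∃ q ∈ Q, c ∈ constsOfAtoms q.body}

def constOr (d : C) : Term C → C
  | .const c => c
  | .null _ => d

theorem const_constOr {t : Term C} (ht : ∃ c, t = .const c) (d : C) :
    .const (constOr d t) = t := by
  obtain ⟨c, rfl⟩ := ht
  rfl

theorem nullFree_union {I K : Instance R C} (hI : nullFree I) (hK : nullFree K) :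
    nullFree (I ∪ K) := by
  rintro f (hf | hf)
  exacts [hI f hf, hK f hf]

section Homomorphisms

theorem applyAtom_congr {h h' : Var → Term C} {a : Atom R C}
    (H : ∀ v, (Sum.inl v : Var ⊕ C) ∈ a.args → h v = h' v) :
    applyAtom h a = applyAtom h' a := by
  simp only [applyAtom, Fact.mk.injEq, true_and]
  refine List.map_congr_left ?_
  rintro (v | c) hx
  · exact H v hx
  · rfl

theorem holdsBody_congr {I : Instance R C} {h h' : Var → Term C} {as : List (Atom R C)}
    (H : ∀ v ∈ varsOf (C := C) as, h v = h' v) (hb : holdsBody I h as) :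
    holdsBody I h' as := fun a ha =>
  applyAtom_congr (fun v hv => H v ⟨a, ha, hv⟩) ▸ hb a ha

theorem holdsBody_mono {K K' : Instance R C} (hKK' : K ⊆ K') {h : Var → Term C}
    {as : List (Atom R C)} (hb : holdsBody K h as) : holdsBody K' h as :=
  fun a ha => hKK' (hb a ha)

theorem applyAtom_comp {φ : Term C → Term C} {h : Var → Term C} {a : Atom R C}
    (hφ : ∀ c, (Sum.inr c : Var ⊕ C) ∈ a.args → φ (.const c) = .const c) :
    applyAtom (φ ∘ h) a = mapFact φ (applyAtom h a) := by
  simp only [applyAtom, mapFact, List.map_map, Fact.mk.injEq, true_and]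
  refine List.map_congr_left ?_
  rintro (v | c) hx
  · rfl
  · exact (hφ c hx).symm

theorem holdsBody_comp {φ : Term C → Term C} {K K' : Instance R C}
    (hφK : ∀ f ∈ K, mapFact φ f ∈ K') {as : List (Atom R C)}
    (hφ : ∀ c ∈ constsOfAtoms (R := R) as, φ (.const c) = .const c) {h : Var → Term C}
    (hb : holdsBody K h as) : holdsBody K' (φ ∘ h) as := fun a ha =>
  (applyAtom_comp fun c hc => hφ c ⟨a, ha, hc⟩) ▸ hφK _ (hb a ha)

theorem map_mem_evalUCQ {φ : Term C → Term C} {K K' : Instance R C}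
    (hφK : ∀ f ∈ K, mapFact φ f ∈ K') {Q : List (CQ R C)}
    (hφ : ∀ c ∈ constsOfUCQ Q, φ (.const c) = .const c) {t : List (Term C)}
    (ht : t ∈ evalUCQ Q K) : t.map φ ∈ evalUCQ Q K' := by
  obtain ⟨q, hq, h, hb, rfl⟩ := ht
  exact ⟨q, hq, φ ∘ h, holdsBody_comp hφK (fun c hc => hφ c ⟨q, hq, hc⟩) hb, List.map_map⟩

theorem map_eq_self_of_const {φ : Term C → Term C} {A : Set C}
    (hφ : ∀ c ∈ A, φ (.const c) = .const c) {t : List (Term C)}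
    (ht : ∀ x ∈ t, ∃ c ∈ A, x = .const c) : t.map φ = t := by
  refine (List.map_congr_left fun x hx => ?_).trans (List.map_id t)
  obtain ⟨c, hc, rfl⟩ := ht x hx
  exact hφ c hc

theorem evalUCQ_mono {Q : List (CQ R C)} {K K' : Instance R C} (hKK' : K ⊆ K')
    {t : List (Term C)} (ht : t ∈ evalUCQ Q K) : t ∈ evalUCQ Q K' := by
  obtain ⟨q, hq, h, hb, rfl⟩ := ht
  exact ⟨q, hq, h, holdsBody_mono hKK' hb, rfl⟩

theorem holdsBody_var_const {K : Instance R C} (hK : nullFree K) {h : Var → Term C}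
    {as : List (Atom R C)} (hb : holdsBody K h as) {v : Var} (hv : v ∈ varsOf (C := C) as) :
    ∃ c, h v = .const c := by
  obtain ⟨a, ha, hva⟩ := hv
  exact hK _ (hb a ha) (h v) (List.mem_map.2 ⟨.inl v, hva, rfl⟩)

theorem const_of_mem_evalUCQ {Q : List (CQ R C)} (hQ : ∀ q ∈ Q, q.safe) {K : Instance R C}
    (hK : nullFree K) {t : List (Term C)} (ht : t ∈ evalUCQ Q K) :
    ∀ x ∈ t, ∃ c, x = .const c := by
  obtain ⟨q, hq, h, hb, rfl⟩ := ht
  intro x hx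
  obtain ⟨v, hv, rfl⟩ := List.mem_map.1 hx
  exact holdsBody_var_const hK hb (hQ q hq v hv)

end Homomorphisms

section Permutations

variable (π : Equiv.Perm (Term C))

theorem mapFact_symm_mapFact (f : Fact R C) : mapFact π.symm (mapFact π f) = f := by
  cases f
  simp [mapFact]

theorem mapFact_symm_mem {K : Instance R C} {f : Fact R C} (hf : f ∈ mapFact π '' K) :
    mapFact π.symm f ∈ K := by
  obtain ⟨g, hg, rfl⟩ := hf
  rwa [mapFact_symm_mapFact]

theorem satTGD_image_perm {ρ : TGD R C}
    (hπ : ∀ c ∈ constsOfTGD ρ, π (.const c) = .const c) {K : Instance R C}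
    (hK : satTGD K ρ) : satTGD (mapFact π '' K) ρ := by
  intro h hb
  have hb' : holdsBody K (π.symm ∘ h) ρ.body :=
    holdsBody_comp (fun f => mapFact_symm_mem π)
      (fun c hc => π.symm_apply_eq.2 (hπ c (.inl hc)).symm) hb
  obtain ⟨h', hagree, hhead⟩ := hK _ hb'
  refine ⟨π ∘ h', fun v hv => by simp [hagree v hv], ?_⟩
  exact holdsBody_comp (fun f hf => Set.mem_image_of_mem _ hf) (fun c hc => hπ c (.inr hc)) hhead

theorem satEGD_image_perm {η : EGD R C}
    (hπ : ∀ c ∈ constsOfEGD η, π (.const c) = .const c) {K : Instance R C}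
    (hK : satEGD K η) : satEGD (mapFact π '' K) η := by
  intro h hb
  have hb' : holdsBody K (π.symm ∘ h) η.body :=
    holdsBody_comp (fun f => mapFact_symm_mem π)
      (fun c hc => π.symm_apply_eq.2 (hπ c hc).symm) hb
  exact π.symm.injective (hK _ hb')

theorem image_mapFact_eq_self {K : Instance R C} (hK : ∀ t ∈ adom K, π t = t) :
    mapFact π '' K = K := by
  refine (Set.image_congr fun f hf => ?_).trans (Set.image_id K)
  cases f with
  | mk rel args =>
    simp only [mapFact, id, Fact.mk.injEq, true_and]
    exact (List.map_congr_left fun t ht => hK t ⟨⟨rel, args⟩, hf, ht⟩).trans (List.map_id args)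

theorem classicalSolution_image_perm {S : Setting R C}
    (hS : ∀ c ∈ constsOfSetting S, π (.const c) = .const c) {I J : Instance R C}
    (hI : ∀ t ∈ adom I, π t = t) (hJ : classicalSolution S I J) :
    classicalSolution S I (mapFact π '' J) := by
  obtain ⟨hfin, hST, hT, hE⟩ := hJ
  refine ⟨hfin.image _, fun ρ hρ => ?_, fun ρ hρ => ?_, fun η hη => ?_⟩
  · rw [← image_mapFact_eq_self π hI, ← Set.image_union]
    exact satTGD_image_perm π
      (fun c hc => hS c (.inl ⟨ρ, List.mem_append_left _ hρ, hc⟩)) (hST ρ hρ)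
  · exact satTGD_image_perm π
      (fun c hc => hS c (.inl ⟨ρ, List.mem_append_right _ hρ, hc⟩)) (hT ρ hρ)
  · exact satEGD_image_perm π (fun c hc => hS c (.inr ⟨η, hη, hc⟩)) (hE η hη)

end Permutations

section Finiteness

theorem finite_constsOfAtoms (as : List (Atom R C)) : (constsOfAtoms (R := R) as).Finite := by
  refine (as.finite_toSet.biUnion fun a _ =>
    a.args.finite_toSet.preimage Sum.inr_injective.injOn).subset ?_
  rintro c ⟨a, ha, hc⟩
  exact Set.mem_biUnion ha hc

theorem finite_constsOfInstance {K : Instance R C} (hK : K.Finite) :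
    (constsOfInstance K).Finite := by
  refine (hK.biUnion fun f _ =>
    f.args.finite_toSet.preimage (fun _ _ _ _ h => Term.const.inj h)).subset ?_
  rintro c ⟨f, hf, hc⟩
  exact Set.mem_biUnion hf hc

theorem finite_constsOfSetting (S : Setting R C) : (constsOfSetting S).Finite := by
  refine .union (((S.sigmaST ++ S.sigmaT).finite_toSet.biUnion fun ρ _ =>
    (finite_constsOfAtoms ρ.body).union (finite_constsOfAtoms ρ.head)).subset ?_)
    ((S.sigmaE.finite_toSet.biUnion fun η _ => finite_constsOfAtoms η.body).subset ?_)
  · rintro c ⟨ρ, hρ, hc⟩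
    exact Set.mem_biUnion hρ hc
  · rintro c ⟨η, hη, hc⟩
    exact Set.mem_biUnion hη hc

theorem finite_constsOfUCQ (Q : List (CQ R C)) : (constsOfUCQ Q).Finite := by
  refine (Q.finite_toSet.biUnion fun q _ => finite_constsOfAtoms q.body).subset ?_
  rintro c ⟨q, hq, hc⟩
  exact Set.mem_biUnion hq hc

end Finiteness

section SwapNulls

open Classical in
noncomputable def swapNulls (r : ℕ → C) : Term C → Term C
  | .null n => .const (r n)
  | .const c => if c ∈ Set.range r then .null (Function.invFun r c) else .const c

theorem swapNulls_const_of_notMem {r : ℕ → C} {c : C} (hc : c ∉ Set.range r) :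
    swapNulls r (.const c) = .const c := by
  simp [swapNulls, hc]

theorem swapNulls_involutive {r : ℕ → C} (hr : Function.Injective r) :
    Function.Involutive (swapNulls r) := by
  rintro (c | n)
  · by_cases hc : c ∈ Set.range r
    · simp [swapNulls, hc, Function.invFun_eq hc]
    · rw [swapNulls_const_of_notMem hc, swapNulls_const_of_notMem hc]
  · simp [swapNulls, Function.leftInverse_invFun hr n]

theorem nullFree_image_swapNulls {r : ℕ → C} {K : Instance R C}
    (hK : ∀ c ∈ constsOfInstance K, c ∉ Set.range r) :
    nullFree (mapFact (swapNulls r) '' K) := by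
  rintro _ ⟨f, hf, rfl⟩ _ hx
  obtain ⟨t, ht, rfl⟩ := List.mem_map.1 hx
  cases t with
  | const c => exact ⟨c, swapNulls_const_of_notMem (hK c ⟨f, hf, ht⟩)⟩
  | null n => exact ⟨r n, rfl⟩

theorem exists_perm_nullFree_image [Infinite C] {A : Set C} (hA : A.Finite) {K : Instance R C}
    (hK : K.Finite) :
    ∃ π : Equiv.Perm (Term C), (∀ c ∈ A, π (.const c) = .const c) ∧
      nullFree (mapFact π '' K) := by
  set e := (hA.union (finite_constsOfInstance hK)).infinite_compl.natEmbedding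
  set r : ℕ → C := fun n => e n
  have hr : Function.Injective r := Subtype.val_injective.comp e.injective
  have hfresh : ∀ c ∈ A ∪ constsOfInstance K, c ∉ Set.range r := by
    rintro c hc ⟨n, rfl⟩
    exact (e n).2 hc
  exact ⟨(swapNulls_involutive hr).toPerm,
    fun c hc => swapNulls_const_of_notMem (hfresh c (.inl hc)),
    nullFree_image_swapNulls fun c hc => hfresh c (.inr hc)⟩

end SwapNulls

section SupportedSolutions

theorem nullFree_applyAtom_constHom (h : Var → C) (a : Atom R C) :
    ∀ t ∈ (applyAtom (constHom h) a).args, ∃ c, t = .const c := by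
  intro t ht
  obtain ⟨x | c, _, rfl⟩ := List.mem_map.1 ht
  · exact ⟨h x, rfl⟩
  · exact ⟨c, rfl⟩

/-- Coherent heads are ground, so the ground facts of a supported solution support it;
minimality then rules out any other fact. -/
theorem supportedSolution.nullFree {S : Setting R C} {I J : Instance R C}
    (hJ : supportedSolution S I J) : nullFree J := by
  obtain ⟨-, γ, ⟨hST, hT, hE⟩, hmin⟩ := hJ
  set G : Instance R C := {f ∈ J | ∀ t ∈ f.args, ∃ c, t = .const c}
  have hGJ : G ⊆ J := fun f hf => hf.1
  have hG : supportedWith S γ I G := by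
    refine ⟨fun ρ hρ h hcoh hb a ha => ?_, fun ρ hρ h hcoh hb a ha => ?_,
      fun η hη h hb => hE η hη h (holdsBody_mono hGJ hb)⟩
    · rcases hST ρ hρ h hcoh (holdsBody_mono (Set.union_subset_union_right I hGJ) hb) a ha
        with hI | hJ
      · exact .inl hI
      · exact .inr ⟨hJ, nullFree_applyAtom_constHom h a⟩
    · exact ⟨hT ρ hρ h hcoh (holdsBody_mono hGJ hb) a ha, nullFree_applyAtom_constHom h a⟩
  have hGeq : G = J := by
    by_contra hne
    exact hmin G (hGJ.ssubset_of_ne hne) hG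
  intro f hf
  exact (hGeq ▸ hf : f ∈ G).2

theorem satTGD_of_satTGDcoh [Nonempty C] {K : Instance R C} {γ : ExChoice R C}
    {ρ : TGD R C} (hρ : ρ.wf) (hK : nullFree K) (hc : satTGDcoh K γ ρ) : satTGD K ρ := by
  classical
  obtain ⟨hfr, hex, -⟩ := hρ
  intro h hb
  set g₀ : Var → C := fun v => constOr (Classical.arbitrary C) (h v)
  set g : Var → C := fun v => if v ∈ ρ.exvars then γ ρ (ρ.frontier.map g₀) v else g₀ v
  have hg : ∀ v ∈ varsOf (C := C) ρ.body, constHom g v = h v := fun v hv => by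
    simp only [constHom, g, if_neg fun hz => hex v hz hv]
    exact const_constOr (holdsBody_var_const hK hb hv) _
  have hfrg : ρ.frontier.map g = ρ.frontier.map g₀ :=
    List.map_congr_left fun v hv => if_neg fun hz => hex v hz (hfr v hv)
  have hcoh : ∀ z ∈ ρ.exvars, g z = γ ρ (ρ.frontier.map g) z := fun z hz => by
    rw [hfrg]
    exact if_pos hz
  refine ⟨constHom g, hg, hc g hcoh ?_⟩
  exact holdsBody_congr (fun v hv => (hg v hv).symm) hb

theorem classicalSolution_of_supportedSolution [Nonempty C] {S : Setting R C} (hS : S.wf)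
    {I J : Instance R C} (hI : nullFree I) (hJ : supportedSolution S I J) :
    classicalSolution S I J := by
  have hJnf : nullFree J := hJ.nullFree
  have hIJ : nullFree (I ∪ J) := nullFree_union hI hJnf
  obtain ⟨hfin, γ, ⟨hST, hT, hE⟩, -⟩ := hJ
  exact ⟨hfin,
    fun ρ hρ => satTGD_of_satTGDcoh (hS ρ (List.mem_append_left _ hρ)) hIJ (hST ρ hρ),
    fun ρ hρ => satTGD_of_satTGDcoh (hS ρ (List.mem_append_right _ hρ)) hJnf (hT ρ hρ), hE⟩

def IsHeadWitness (K : Instance R C) (ρ : TGD R C) (fr : List C) (g : Var → C) : Prop :=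
  ρ.frontier.map g = fr ∧ holdsBody K (constHom g) ρ.head

theorem holdsBody_head_of_isHeadWitness {K : Instance R C} {ρ : TGD R C} (hρ : ρ.wf)
    {h g : Var → C} (hW : IsHeadWitness K ρ (ρ.frontier.map h) g)
    (hex : ∀ z ∈ ρ.exvars, h z = g z) : holdsBody K (constHom h) ρ.head := by
  refine holdsBody_congr (fun v hv => ?_) hW.2
  rcases hρ.2.2 v hv with hv | hv
  · exact congrArg Term.const (List.map_inj_left.1 hW.1 v hv)
  · exact congrArg Term.const (hex v hv).symm

theorem exists_isHeadWitness {K : Instance R C} (hK : nullFree K) {ρ : TGD R C} (hρ : ρ.wf)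
    (hsat : satTGD K ρ) {h : Var → C} (hb : holdsBody K (constHom h) ρ.body) :
    ∃ g, IsHeadWitness K ρ (ρ.frontier.map h) g := by
  obtain ⟨h', hagree, hhead⟩ := hsat _ hb
  refine ⟨fun v => constOr (h v) (h' v), List.map_congr_left fun v hv => ?_,
    holdsBody_congr (fun v hv => ?_) hhead⟩
  · simp [hagree v (hρ.1 v hv), constOr, constHom]
  · exact (const_constOr (holdsBody_var_const hK hhead hv) _).symm

open Classical in
/-- A witness inside `K` is preferred: the target dependencies must hold in `K` itself. -/
noncomputable def witnessChoice [Nonempty C] (I K : Instance R C) : ExChoice R C :=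
  fun ρ fr => if ∃ g, IsHeadWitness K ρ fr g then Classical.epsilon (IsHeadWitness K ρ fr)
    else Classical.epsilon (IsHeadWitness (I ∪ K) ρ fr)

theorem satTGDcoh_witnessChoice [Nonempty C] {I K K₂ : Instance R C}
    (hK₂ : K₂ = K ∨ K₂ = I ∪ K) (hK₂nf : nullFree K₂) {ρ : TGD R C} (hρ : ρ.wf)
    (hsat : satTGD K₂ ρ) : satTGDcoh K₂ (witnessChoice I K) ρ := by
  intro h hcoh hb
  have hW₂ := exists_isHeadWitness hK₂nf hρ hsat hb
  by_cases hW : ∃ g, IsHeadWitness K ρ (ρ.frontier.map h) g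
  · have hγ : witnessChoice I K ρ (ρ.frontier.map h) =
        Classical.epsilon (IsHeadWitness K ρ (ρ.frontier.map h)) := if_pos hW
    refine holdsBody_mono ?_ (holdsBody_head_of_isHeadWitness hρ (Classical.epsilon_spec hW)
      fun z hz => (hcoh z hz).trans (congrFun hγ z))
    rcases hK₂ with rfl | rfl
    exacts [subset_rfl, Set.subset_union_right]
  · obtain rfl : K₂ = I ∪ K := hK₂.resolve_left fun hK => hW (hK ▸ hW₂)
    have hγ : witnessChoice I K ρ (ρ.frontier.map h) =
        Classical.epsilon (IsHeadWitness (I ∪ K) ρ (ρ.frontier.map h)) := if_neg hW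
    exact holdsBody_head_of_isHeadWitness hρ (Classical.epsilon_spec hW₂)
      fun z hz => (hcoh z hz).trans (congrFun hγ z)

theorem exists_supportedSolution_subset [Nonempty C] {S : Setting R C} (hS : S.wf)
    {I K : Instance R C} (hI : nullFree I) (hK : classicalSolution S I K) (hKnf : nullFree K) :
    ∃ K' ⊆ K, supportedSolution S I K' := by
  obtain ⟨hfin, hST, hT, hE⟩ := hK
  have hIK : nullFree (I ∪ K) := nullFree_union hI hKnf
  set γ := witnessChoice I K
  have hγ : supportedWith S γ I K :=
    ⟨fun ρ hρ => satTGDcoh_witnessChoice (.inr rfl) hIK (hS ρ (List.mem_append_left _ hρ))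
        (hST ρ hρ),
      fun ρ hρ => satTGDcoh_witnessChoice (.inl rfl) hKnf (hS ρ (List.mem_append_right _ hρ))
        (hT ρ hρ), hE⟩
  obtain ⟨K', hK'K, hmin⟩ := Set.Finite.exists_le_minimal
    (s := {K' | K' ⊆ K ∧ supportedWith S γ I K'}) (hfin.finite_subsets.subset fun _ h => h.1)
    ⟨subset_rfl, hγ⟩
  exact ⟨K', hK'K, hfin.subset hK'K, γ, hmin.prop.2,
    fun J' hJ' hJ'γ => hmin.not_prop_of_lt hJ' ⟨hJ'.subset.trans hK'K, hJ'γ⟩⟩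

end SupportedSolutions

theorem mem_scert_of_mem_evalUCQ [Nonempty C] {S : Setting R C} (hS : S.wf)
    {Q : List (CQ R C)} {I J : Instance R C} (hI : nullFree I) (hJ : universalSolution S I J)
    {t : List (Term C)} (ht : t ∈ evalUCQ Q J) (htc : ∀ x ∈ t, ∃ c, x = .const c) :
    t ∈ scert S I Q := by
  intro Js hJs
  obtain ⟨φ, hφc, hφ⟩ := hJ.2 Js (classicalSolution_of_supportedSolution hS hI hJs)
  have htφ : t.map φ = t :=
    map_eq_self_of_const (A := Set.univ) (fun c _ => hφc c) fun x hx =>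
      (htc x hx).imp fun _ hc => ⟨trivial, hc⟩
  exact htφ ▸ map_mem_evalUCQ hφ (fun c _ => hφc c) ht

theorem mem_evalUCQ_of_mem_scert [Infinite C] {S : Setting R C} (hS : S.wf)
    {Q : List (CQ R C)} (hQ : ∀ q ∈ Q, q.safe) {I J : Instance R C} (hI : nullFree I)
    (hIfin : I.Finite) (hJ : classicalSolution S I J) {t : List (Term C)}
    (ht : t ∈ scert S I Q) : t ∈ evalUCQ Q J ∧ ∀ x ∈ t, ∃ c, x = .const c := by
  set A : Set C :=
    constsOfSetting S ∪ constsOfInstance I ∪ constsOfUCQ Q ∪ {c | .const c ∈ t}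
  have hA : A.Finite :=
    (((finite_constsOfSetting S).union (finite_constsOfInstance hIfin)).union
      (finite_constsOfUCQ Q)).union (t.finite_toSet.preimage fun _ _ _ _ h => Term.const.inj h)
  obtain ⟨π, hπ, hJ₀nf⟩ := exists_perm_nullFree_image hA hJ.1
  have hπsymm : ∀ c ∈ A, π.symm (.const c) = .const c := fun c hc =>
    π.symm_apply_eq.2 (hπ c hc).symm
  have hJ₀ : classicalSolution S I (mapFact π '' J) := by
    refine classicalSolution_image_perm π (fun c hc => hπ c (by simp [A, hc])) ?_ hJ
    rintro _ ⟨f, hf, hx⟩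
    obtain ⟨c, rfl⟩ := hI f hf _ hx
    exact hπ c (by simp only [A, Set.mem_union]; exact .inl (.inl (.inr ⟨f, hf, hx⟩)))
  obtain ⟨K, hKJ₀, hK⟩ := exists_supportedSolution_subset hS hI hJ₀ hJ₀nf
  have htc := const_of_mem_evalUCQ hQ hK.nullFree (ht K hK)
  refine ⟨?_, htc⟩
  have htπ : t.map π.symm = t := map_eq_self_of_const hπsymm fun x hx =>
    (htc x hx).imp fun c hc => ⟨by simp [A, ← hc, hx], hc⟩
  exact htπ ▸ map_mem_evalUCQ (fun f => mapFact_symm_mem π)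
    (fun c hc => hπsymm c (by simp [A, hc])) (evalUCQ_mono hKJ₀ (ht K hK))

end DE

/-- for a positive query, the supported certain answers equal the
null-free answers on a universal solution. -/
theorem scert_eq_nullfree_answers_on_universal {R C : Type} [Infinite C]
    (S : DE.Setting R C) (hS : S.wf)
    (Q : List (DE.CQ R C)) (hQ : ∀ q ∈ Q, q.safe)
    (I : DE.Instance R C) (hInf : DE.nullFree I) (hIfin : I.Finite)
    (J : DE.Instance R C) (hU : DE.universalSolution S I J) :
    DE.scert S I Q =
      {t | t ∈ DE.evalUCQ Q J ∧ ∀ x ∈ t, ∃ c : C, x = DE.Term.const c} :=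
  Set.Subset.antisymm (fun _ ht => DE.mem_evalUCQ_of_mem_scert hS hQ hInf hIfin hU.1 ht)
    fun _ ht => DE.mem_scert_of_mem_evalUCQ hS hInf hU ht.1 ht.2
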